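/- arXiv:2008.07213 — 2 statements merged into one kernel-verified Lean document; each statement's English description precedes it below -/
import Mathlib

section
/- Let W = G(e,r,n) = A(e,r,n) ⋊ S_n act on T̆ = (Z_ℓ/ℓ^∞)^n, where e | (ℓ−1). For t = (λ_1,…,λ_n) ∈ T̆, declare i ~ j iff λ_i = ζ λ_j for some e-th root of unity ζ ∈ Z_ℓ; let u_0 be the number of indices with λ_i = 0, and u_1,…,u_s the sizes of the remaining equivalence classes. Then the centralizer C_W(t) is isomorphic to G(e,r,u_0) × S_{u_1} × ⋯ × S_{u_s}, and in particular C_W(t) is generated by the reflections it contains. -/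
/-- The action of `S_n` on the base group `Fin n → A` of a wreath product. -/
def wreathAct (n : ℕ) (A : Type) [Group A] :
    Equiv.Perm (Fin n) →* MulAut (Fin n → A) where
  toFun σ :=
    { toFun := fun f => f ∘ σ.symm
      invFun := fun f => f ∘ σ
      left_inv := fun f => by ext i; simp
      right_inv := fun f => by ext i; simp
      map_mul' := fun f g => rfl }
  map_one' := by ext f i; rfl
  map_mul' := fun σ τ => by ext f i; rfl

/-- The wreath product `A ≀ S_n`. -/
abbrev Wreath (A : Type) [Group A] (n : ℕ) : Type :=
  (Fin n → A) ⋊[wreathAct n A] Equiv.Perm (Fin n)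

/-- The imprimitive reflection group `G(e,r,n)`, realised as the group of monomial
`n × n` matrices (encoded as pairs of a diagonal part and a permutation) whose
nonzero entries are `e`-th roots of unity with product an `(e/r)`-th root of unity. -/
def Gerr (A : Type) [CommGroup A] (e r n : ℕ) : Subgroup (Wreath A n) where
  carrier := {x | (∀ i, x.left i ^ e = 1) ∧ (∏ i, x.left i) ^ (e / r) = 1}
  one_mem' := by
    constructor
    · intro i; simp [SemidirectProduct.one_left]
    · simp [SemidirectProduct.one_left]
  mul_mem' := by
    rintro x y ⟨hx1, hx2⟩ ⟨hy1, hy2⟩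
    have hl : (x * y).left = fun i => x.left i * y.left (x.right.symm i) := rfl
    constructor
    · intro i
      rw [hl]
      simp only [mul_pow, hx1 i, hy1 _, mul_one]
    · rw [hl]
      rw [Finset.prod_mul_distrib]
      have : (∏ i, y.left (x.right.symm i)) = ∏ i, y.left i :=
        Equiv.prod_comp x.right.symm y.left
      rw [this, mul_pow, hx2, hy2, mul_one]
  inv_mem' := by
    rintro x ⟨hx1, hx2⟩
    constructor
    · intro i
      have h : (x⁻¹).left i = (x.left (x.right i))⁻¹ := rfl
      rw [h, inv_pow, hx1, inv_one]
    · have hb : (∏ i, (x⁻¹).left i) = ∏ i, (x.left (x.right i))⁻¹ :=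
        Finset.prod_congr rfl fun i _ => rfl
      have hc : (∏ i, (x.left (x.right i))⁻¹) = (∏ i, x.left i)⁻¹ := by
        rw [Equiv.prod_comp x.right fun i => (x.left i)⁻¹, ← Finset.prod_inv_distrib]
      rw [hb, hc, inv_pow, hx2, inv_one]

variable (ℓ : ℕ) [Fact ℓ.Prime]

/-- The `ℤ_ℓ`-module `ℚ_ℓ/ℤ_ℓ` (`= ℤ_ℓ/ℓ^∞`). -/
abbrev QmodZ : Type :=
  ℚ_[ℓ] ⧸ (Submodule.span ℤ_[ℓ] ({1} : Set ℚ_[ℓ]))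

/-- The centraliser `C_W(t)` of a point `t` of the discrete torus
`T̆ = (ℤ_ℓ/ℓ^∞)^n` inside `W = G(e,r,n)`, where a monomial matrix `x` acts on `T̆` by
`(x • t) i = x.left i • t (x.right⁻¹ i)`. -/
def torusCentralizer (e r n : ℕ) (t : Fin n → QmodZ ℓ) :
    Subgroup (Wreath ℤ_[ℓ]ˣ n) where
  carrier := {x | x ∈ Gerr ℤ_[ℓ]ˣ e r n ∧
    ∀ i, ((x.left i : ℤ_[ℓ])) • t (x.right.symm i) = t i}
  one_mem' := by
    refine ⟨(Gerr ℤ_[ℓ]ˣ e r n).one_mem, fun i => ?_⟩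
    show (((1 : Fin n → ℤ_[ℓ]ˣ) i : ℤ_[ℓ])) • t ((1 : Equiv.Perm (Fin n)).symm i) = t i
    simp
    rfl
  mul_mem' := by
    rintro x y ⟨hx, hx2⟩ ⟨hy, hy2⟩
    refine ⟨(Gerr ℤ_[ℓ]ˣ e r n).mul_mem hx hy, fun i => ?_⟩
    have h1 : (x * y).left i = x.left i * y.left (x.right.symm i) := rfl
    have h2 : (x * y).right.symm i = y.right.symm (x.right.symm i) := rfl
    rw [h1, h2, Units.val_mul, mul_smul, hy2, hx2]
  inv_mem' := by
    rintro x ⟨hx, hx2⟩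
    refine ⟨(Gerr ℤ_[ℓ]ˣ e r n).inv_mem hx, fun i => ?_⟩
    have h1 : (x⁻¹).left i = (x.left (x.right i))⁻¹ := rfl
    have h2 : (x⁻¹).right.symm i = x.right i := rfl
    rw [h1, h2]
    have := hx2 (x.right i)
    rw [Equiv.symm_apply_apply] at this
    rw [← this, ← mul_smul, ← Units.val_mul, inv_mul_cancel, Units.val_one, one_smul]

/-- The reflection representation of the monomial group on the lattice
`L = ℤ_ℓ^n`. -/
noncomputable def linAct (n : ℕ) (x : Wreath ℤ_[ℓ]ˣ n) :
    (Fin n → ℤ_[ℓ]) →ₗ[ℤ_[ℓ]] (Fin n → ℤ_[ℓ]) where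
  toFun v := fun i => (x.left i : ℤ_[ℓ]) * v (x.right.symm i)
  map_add' := by intro a b; funext i; simp [mul_add]
  map_smul' := by
    intro c a
    funext i
    simp only [Pi.smul_apply, smul_eq_mul, RingHom.id_apply]
    ring

/-- `x` is a reflection of `G(e,r,n)`: it is nontrivial and its fixed space in the
reflection representation on `ℤ_ℓ^n` has corank one. -/
def IsWreathReflection (n : ℕ) (x : Wreath ℤ_[ℓ]ˣ n) : Prop :=
  x ≠ 1 ∧
    Module.finrank ℤ_[ℓ] (LinearMap.ker (linAct ℓ n x - LinearMap.id)) + 1 = n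

/-!
Since `e ∣ ℓ - 1`, `e` is a unit of `ℤ_ℓ`, hence so is `ζ - 1` for every `e`-th root of unity
`ζ ≠ 1`: these roots act freely on `ℚ_ℓ/ℤ_ℓ ∖ {0}`. Label each coordinate by its class, the zero
coordinates forming one more block, and choose a representative `rep i` of each class and roots
`w i` with `t i = w i • t (rep i)`. The permutation part `σ` of an element `(δ, σ)` of `C_W(t)`
preserves every block, and on a nonzero coordinate `δ i` is the unique root carrying `t (σ⁻¹ i)`
to `t i`, i.e. the coboundary `w i / w (σ⁻¹ i)`, whose product over all `i` is `1`. So `(δ, σ)`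
is determined by its restriction to the zero block, which lies in `G(e,r,u₀)`, and by the
permutations it induces on the classes; conversely, with the coboundary as diagonal on the nonzero
coordinates, every such pair gives an element of `C_W(t)`, and this map is a homomorphism.

For generation, multiplying by the transposition-type reflection of `C_W(t)` exchanging `a` and
`σ a` shortens `σ`; a diagonal element of `C_W(t)` lives on the zero block and is a product of
elements `diag(ζ at a, ζ⁻¹ at b)`, each a product of two transposition-type reflections, and of
one diagonal reflection at the fixed coordinate `b`.
-/

open IsLocalRing in
theorem IsLocalRing.isUnit_sub_one_of_pow_eq_one {R : Type*} [CommRing R] [IsLocalRing R]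
    {e : ℕ} (he : IsUnit (e : R)) {z : R} (hz : z ^ e = 1) (hz1 : z ≠ 1) : IsUnit (z - 1) := by
  by_contra h
  -- if `z ≡ 1`, then `1 + z + ⋯ + z ^ (e - 1) ≡ e` is a unit annihilating `z - 1`
  have hres : residue R z = 1 := by
    rw [← sub_eq_zero, ← map_one (residue R), ← map_sub, residue_eq_zero_iff]
    exact h
  have hsum : IsUnit (∑ i ∈ Finset.range e, z ^ i) := by
    rw [← residue_ne_zero_iff_isUnit, map_sum]
    simpa [hres] using (residue_ne_zero_iff_isUnit _).mpr he
  apply hz1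
  rw [← sub_eq_zero, ← hsum.mul_right_eq_zero, geom_sum_mul, hz, sub_self]

theorem eq_of_pow_eq_one_of_smul_eq_smul {R M : Type*} [CommRing R] [IsLocalRing R]
    [AddCommGroup M] [Module R M] {e : ℕ} (he : IsUnit (e : R)) {ζ ζ' : Rˣ} (hζ : ζ ^ e = 1)
    (hζ' : ζ' ^ e = 1) {m : M} (hm : m ≠ 0) (h : (ζ : R) • m = (ζ' : R) • m) : ζ = ζ' := by
  by_contra hne
  have hz1 : ((ζ'⁻¹ * ζ : Rˣ) : R) ≠ 1 := by
    rw [Ne, Units.val_eq_one, inv_mul_eq_one]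
    exact Ne.symm hne
  have hz : ((ζ'⁻¹ * ζ : Rˣ) : R) ^ e = 1 := by
    rw [← Units.val_pow_eq_pow_val, mul_pow, inv_pow, hζ, hζ', inv_one, one_mul, Units.val_one]
  apply hm
  rw [← (IsLocalRing.isUnit_sub_one_of_pow_eq_one he hz hz1).smul_eq_zero, sub_smul, one_smul,
    sub_eq_zero, Units.val_mul, mul_smul, h, smul_smul, ← Units.val_mul, inv_mul_cancel,
    Units.val_one, one_smul]

theorem PadicInt.isUnit_natCast_of_dvd_sub_one {p : ℕ} [Fact p.Prime] {e : ℕ}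
    (h : e ∣ p - 1) : IsUnit (e : ℤ_[p]) :=
  isUnit_of_dvd_unit (Nat.cast_dvd_cast h) (PadicInt.isUnit_iff.mpr PadicInt.norm_natCast_p_sub_one)

section Coboundary
variable {ι G : Type*} [CommGroup G] (w : ι → G)

def permCoboundary (σ : Equiv.Perm ι) (i : ι) : G := w i / w (σ.symm i)

theorem permCoboundary_mul (σ τ : Equiv.Perm ι) (i : ι) :
    permCoboundary w (σ * τ) i = permCoboundary w σ i * permCoboundary w τ (σ.symm i) :=
  (div_mul_div_cancel _ _ _).symm

theorem prod_permCoboundary [Fintype ι] (σ : Equiv.Perm ι) : ∏ i, permCoboundary w σ i = 1 := by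
  simp only [permCoboundary, Finset.prod_div_distrib, Equiv.prod_comp, div_self']

end Coboundary

theorem Equiv.Perm.mem_range_sigmaCongrRightHom_iff {α : Type*} {β : α → Type*}
    {q : Equiv.Perm (Σ a, β a)} :
    q ∈ (Equiv.Perm.sigmaCongrRightHom β).range ↔ ∀ x, (q x).1 = x.1 := by
  refine ⟨fun ⟨π, hπ⟩ x => hπ ▸ rfl, fun hq => ?_⟩
  have hfib (a : α) (x : Σ a, β a) : (q x).1 = a ↔ x.1 = a := by rw [hq]
  have hsigma (a : α) (y : Σ a, β a) (h : y.1 = a) :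
      (⟨a, Equiv.sigmaSubtype a ⟨y, h⟩⟩ : Σ a, β a) = y := by
    obtain ⟨a', b'⟩ := y
    subst h
    rfl
  exact ⟨fun a => ((Equiv.sigmaSubtype a).symm.trans (q.subtypePerm (hfib a))).trans
    (Equiv.sigmaSubtype a), Equiv.ext fun ⟨a, b⟩ => hsigma a _ _⟩

theorem Subgroup.closure_preimage_subtype_eq_top {G : Type*} [Group G] {H : Subgroup G}
    {s : Set G} (h : H ≤ Subgroup.closure {x | x ∈ H ∧ x ∈ s}) :
    Subgroup.closure (((↑) : H → G) ⁻¹' s) = ⊤ := by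
  apply Subgroup.map_injective H.subtype_injective
  rw [MonoidHom.map_closure, ← MonoidHom.range_eq_map, Subgroup.range_subtype]
  refine le_antisymm (Subgroup.closure_le _ |>.mpr ?_) (h.trans (Subgroup.closure_mono ?_))
  · rintro _ ⟨x, -, rfl⟩
    exact x.2
  · rintro x ⟨hxH, hxs⟩
    exact ⟨⟨x, hxH⟩, hxs, rfl⟩

theorem Pi.mem_subgroup_of_mulSingle_mem {ι A : Type*} [DecidableEq ι] [Fintype ι] [CommGroup A]
    {H : Subgroup (ι → A)} {p : ι → Prop} {e f : ℕ}
    (hpair : ∀ a b, p a → p b → ∀ z : A, z ^ e = 1 → Pi.mulSingle a z * Pi.mulSingle b z⁻¹ ∈ H)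
    (hsingle : ∀ a, p a → ∀ z : A, z ^ e = 1 → z ^ f = 1 → Pi.mulSingle a z ∈ H)
    {d : ι → A} (hdp : ∀ i, ¬ p i → d i = 1) (hde : ∀ i, d i ^ e = 1)
    (hdf : (∏ i, d i) ^ f = 1) : d ∈ H := by
  rcases em (∃ b, p b) with ⟨b, hb⟩ | hp
  swap
  · rw [show d = 1 from funext fun i => hdp i fun hi => hp ⟨i, hi⟩]
    exact H.one_mem
  -- every entry is moved to the pivot `b`, where the entries multiply to an allowed single entry
  have hd : d = (∏ a, Pi.mulSingle a (d a) * Pi.mulSingle b (d a)⁻¹) *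
      Pi.mulSingle b (∏ a, d a) := by
    ext i
    rcases eq_or_ne i b with rfl | hi
    · simp [Finset.prod_mul_distrib, Pi.mulSingle_apply, Finset.prod_inv_distrib]
    · simp [Finset.prod_mul_distrib, Pi.mulSingle_apply, hi]
  rw [hd]
  refine H.mul_mem (H.prod_mem fun a _ => ?_)
    (hsingle b hb _ (by rw [← Finset.prod_pow]; simp [hde]) hdf)
  by_cases ha : p a
  · exact hpair a b ha hb _ (hde a)
  · simp [hdp a ha, H.one_mem]

theorem finrank_ker_add_one_of_surjective {R ι : Type*} [CommRing R] [IsDomain R] [Fintype ι]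
    {f : (ι → R) →ₗ[R] R} (hf : Function.Surjective f) :
    Module.finrank R (LinearMap.ker f) + 1 = Fintype.card ι := by
  rw [← Module.finrank_fintype_fun_eq_card (R := R),
    ← (LinearMap.ker f).finrank_quotient_add_finrank, (f.quotKerEquivOfSurjective hf).finrank_eq,
    Module.finrank_self, add_comm]

section Blocks
variable {ι M κ : Type*}

section Label
variable [Zero M] (t : ι → M) (cls : {i // t i ≠ 0} → κ)

open Classical in
noncomputable def blockLabel (i : ι) : Option κ :=
  if h : t i = 0 then none else some (cls ⟨i, h⟩)

noncomputable def blockRep (i : ι) : ι :=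
  (⟨i, rfl⟩ : ∃ j, blockLabel t cls j = blockLabel t cls i).choose

variable {t cls}

theorem blockLabel_eq_none_iff {i : ι} : blockLabel t cls i = none ↔ t i = 0 := by
  by_cases h : t i = 0 <;> simp [blockLabel, h]

theorem blockLabel_of_ne_zero {i : ι} (h : t i ≠ 0) :
    blockLabel t cls i = some (cls ⟨i, h⟩) :=
  dif_neg h

theorem blockLabel_blockRep (i : ι) :
    blockLabel t cls (blockRep t cls i) = blockLabel t cls i :=
  (⟨i, rfl⟩ : ∃ j, blockLabel t cls j = blockLabel t cls i).choose_spec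

theorem blockRep_eq_of_blockLabel_eq {i j : ι} (h : blockLabel t cls i = blockLabel t cls j) :
    blockRep t cls i = blockRep t cls j := by
  simp only [blockRep, h]

end Label

section Root
variable {R : Type*} [CommRing R] [AddCommGroup M] [Module R M] {e : ℕ} {t : ι → M}
  {cls : {i // t i ≠ 0} → κ}

theorem blockLabel_eq_iff
    (hcls : ∀ i j : {i // t i ≠ 0}, cls i = cls j ↔ ∃ ζ : Rˣ, ζ ^ e = 1 ∧ t i = (ζ : R) • t j)
    {i j : ι} :
    blockLabel t cls i = blockLabel t cls j ↔ ∃ ζ : Rˣ, ζ ^ e = 1 ∧ t i = (ζ : R) • t j := by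
  by_cases hj : t j = 0
  · rw [blockLabel_eq_none_iff.mpr hj, blockLabel_eq_none_iff]
    exact ⟨fun hi => ⟨1, one_pow e, by rw [hi, hj, smul_zero]⟩,
      fun ⟨ζ, _, hi⟩ => by rw [hi, hj, smul_zero]⟩
  by_cases hi : t i = 0
  · rw [blockLabel_eq_none_iff.mpr hi, eq_comm, blockLabel_eq_none_iff]
    exact ⟨fun h => absurd h hj,
      fun ⟨ζ, _, h⟩ => absurd ((ζ.isUnit.smul_eq_zero).mp (h ▸ hi)) hj⟩
  rw [blockLabel_of_ne_zero hi, blockLabel_of_ne_zero hj, Option.some_inj]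
  exact hcls ⟨i, hi⟩ ⟨j, hj⟩

variable (R e t cls) in
open Classical in
noncomputable def blockRoot (i : ι) : Rˣ :=
  if h : t i ≠ 0 ∧ ∃ ζ : Rˣ, ζ ^ e = 1 ∧ t i = (ζ : R) • t (blockRep t cls i) then h.2.choose
  else 1

theorem blockRoot_of_eq_zero {i : ι} (h : t i = 0) : blockRoot R e t cls i = 1 :=
  dif_neg fun h' => h'.1 h

theorem blockRoot_spec
    (hcls : ∀ i j : {i // t i ≠ 0}, cls i = cls j ↔ ∃ ζ : Rˣ, ζ ^ e = 1 ∧ t i = (ζ : R) • t j)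
    (i : ι) :
    blockRoot R e t cls i ^ e = 1 ∧ t i = (blockRoot R e t cls i : R) • t (blockRep t cls i) := by
  by_cases hi : t i = 0
  · have hrep : t (blockRep t cls i) = 0 := by
      rw [← blockLabel_eq_none_iff (cls := cls), blockLabel_blockRep, blockLabel_eq_none_iff.mpr hi]
    rw [blockRoot_of_eq_zero hi, hi, hrep, smul_zero]
    exact ⟨one_pow e, rfl⟩
  · have h : t i ≠ 0 ∧ ∃ ζ : Rˣ, ζ ^ e = 1 ∧ t i = (ζ : R) • t (blockRep t cls i) :=
      ⟨hi, (blockLabel_eq_iff hcls).mp (blockLabel_blockRep i).symm⟩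
    rw [blockRoot, dif_pos h]
    exact h.2.choose_spec

theorem permCoboundary_blockRoot_pow
    (hcls : ∀ i j : {i // t i ≠ 0}, cls i = cls j ↔ ∃ ζ : Rˣ, ζ ^ e = 1 ∧ t i = (ζ : R) • t j)
    (σ : Equiv.Perm ι) (i : ι) : permCoboundary (blockRoot R e t cls) σ i ^ e = 1 := by
  rw [permCoboundary, div_pow, (blockRoot_spec hcls i).1, (blockRoot_spec hcls _).1, div_one]

theorem permCoboundary_blockRoot_smul
    (hcls : ∀ i j : {i // t i ≠ 0}, cls i = cls j ↔ ∃ ζ : Rˣ, ζ ^ e = 1 ∧ t i = (ζ : R) • t j)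
    {σ : Equiv.Perm ι} (hσ : ∀ i, blockLabel t cls (σ.symm i) = blockLabel t cls i) (i : ι) :
    ((permCoboundary (blockRoot R e t cls) σ i : Rˣ) : R) • t (σ.symm i) = t i := by
  rw [(blockRoot_spec hcls (σ.symm i)).2, blockRep_eq_of_blockLabel_eq (hσ i), smul_smul,
    ← Units.val_mul, permCoboundary, div_mul_cancel, ← (blockRoot_spec hcls i).2]

end Root

end Blocks

section BlockPerm
variable {ι M A : Type*} [Zero M] {t : ι → M} {u₀ s : ℕ} {u : Fin s → ℕ}
  (ε : {i // t i = 0} ≃ Fin u₀) (Φ : {i // t i ≠ 0} ≃ (j : Fin s) × Fin (u j))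

theorem blockLabel_coe_symm (x : (j : Fin s) × Fin (u j)) :
    blockLabel t (fun m => (Φ m).1) (Φ.symm x) = some x.1 := by
  rw [blockLabel_of_ne_zero (Φ.symm x).2]
  simp

variable [DecidablePred fun i => t i = 0]

def blockPerm :
    Equiv.Perm (Fin u₀) × ((j : Fin s) → Equiv.Perm (Fin (u j))) →* Equiv.Perm ι :=
  (Equiv.Perm.subtypeCongrHom fun i => t i = 0).comp
    ((ε.symm.permCongrHom : _ →* _).prodMap
      ((Φ.symm.permCongrHom : _ →* _).comp (Equiv.Perm.sigmaCongrRightHom _)))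

theorem blockPerm_injective : Function.Injective (blockPerm ε Φ) :=
  (Equiv.Perm.subtypeCongrHom_injective _).comp <| Function.Injective.prodMap
    ε.symm.permCongrHom.injective
    (Φ.symm.permCongrHom.injective.comp Equiv.Perm.sigmaCongrRightHom_injective)

theorem blockPerm_apply_of_eq_zero (g) {i : ι} (h : t i = 0) :
    blockPerm ε Φ g i = ε.symm (g.1 (ε ⟨i, h⟩)) :=
  Equiv.Perm.subtypeCongr.left_apply (p := fun i => t i = 0) _ _ h

theorem blockPerm_apply_of_ne_zero (g) {i : ι} (h : t i ≠ 0) :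
    blockPerm ε Φ g i = Φ.symm (Equiv.Perm.sigmaCongrRight g.2 (Φ ⟨i, h⟩)) :=
  Equiv.Perm.subtypeCongr.right_apply (p := fun i => t i = 0) _ _ h

theorem blockPerm_symm_apply_of_eq_zero (g) {i : ι} (h : t i = 0) :
    (blockPerm ε Φ g).symm i = ε.symm (g.1.symm (ε ⟨i, h⟩)) := by
  rw [← Equiv.Perm.inv_def, ← map_inv, blockPerm_apply_of_eq_zero ε Φ _ h]
  rfl

theorem mem_range_blockPerm_iff {σ : Equiv.Perm ι} :
    σ ∈ (blockPerm ε Φ).range ↔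
      ∀ i, blockLabel t (fun m => (Φ m).1) (σ i) = blockLabel t (fun m => (Φ m).1) i := by
  constructor
  · rintro ⟨g, rfl⟩ i
    by_cases h : t i = 0
    · rw [blockPerm_apply_of_eq_zero ε Φ g h, blockLabel_eq_none_iff.mpr h,
        blockLabel_eq_none_iff]
      exact (ε.symm _).2
    · rw [blockPerm_apply_of_ne_zero ε Φ g h, blockLabel_coe_symm, blockLabel_of_ne_zero h]
      rfl
  intro hσ
  have hZ (i : ι) : t (σ i) = 0 ↔ t i = 0 := by
    rw [← blockLabel_eq_none_iff (cls := fun m => (Φ m).1), hσ, blockLabel_eq_none_iff]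
  have hN (i : ι) : t (σ i) ≠ 0 ↔ t i ≠ 0 := not_congr (hZ i)
  obtain ⟨π, hπ⟩ := (Equiv.Perm.mem_range_sigmaCongrRightHom_iff
      (q := Φ.permCongr (σ.subtypePerm hN))).mpr fun x => by
    have hx := hσ (Φ.symm x)
    rw [blockLabel_coe_symm, blockLabel_of_ne_zero ((hN _).mpr (Φ.symm x).2),
      Option.some_inj] at hx
    simpa using hx
  refine ⟨(ε.permCongr (σ.subtypePerm hZ), π), Equiv.ext fun i => ?_⟩
  by_cases h : t i = 0
  · rw [blockPerm_apply_of_eq_zero ε Φ _ h]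
    simp
  · have hπ' : Equiv.Perm.sigmaCongrRight π = Φ.permCongr (σ.subtypePerm hN) := hπ
    rw [blockPerm_apply_of_ne_zero ε Φ _ h]
    simp [hπ']

theorem blockLabel_blockPerm_symm_apply (g) (i : ι) :
    blockLabel t (fun m => (Φ m).1) ((blockPerm ε Φ g).symm i) =
      blockLabel t (fun m => (Φ m).1) i :=
  (mem_range_blockPerm_iff ε Φ).mp ⟨g⁻¹, map_inv _ g⟩ i

theorem blockPerm_symm_apply_eq_zero_iff (g) {i : ι} :
    t ((blockPerm ε Φ g).symm i) = 0 ↔ t i = 0 := by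
  rw [← blockLabel_eq_none_iff (cls := fun m => (Φ m).1), blockLabel_blockPerm_symm_apply,
    blockLabel_eq_none_iff]

def zeroBlockDiag [One A] (d : Fin u₀ → A) (i : ι) : A :=
  if h : t i = 0 then d (ε ⟨i, h⟩) else 1

theorem zeroBlockDiag_coe_symm [One A] (d : Fin u₀ → A) (k : Fin u₀) :
    zeroBlockDiag ε d (ε.symm k : ι) = d k := by
  simp [zeroBlockDiag, (ε.symm k).2]

theorem prod_zeroBlockDiag [Fintype ι] [CommMonoid A] (d : Fin u₀ → A) :
    ∏ i, zeroBlockDiag ε d i = ∏ k, d k := by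
  have hZ (z : {i // t i = 0}) : zeroBlockDiag ε d z = d (ε z) := dif_pos z.2
  have hN (m : {i // ¬ t i = 0}) : zeroBlockDiag ε d m = 1 := dif_neg m.2
  rw [← Fintype.prod_subtype_mul_prod_subtype (fun i => t i = 0)]
  simp only [hZ, hN, Finset.prod_const_one, mul_one, Equiv.prod_comp ε d]

theorem zeroBlockDiag_mul_comp_symm [Monoid A] (d d' : Fin u₀ → A) (g) (i : ι) :
    zeroBlockDiag ε (fun k => d k * d' (g.1.symm k)) i =
      zeroBlockDiag ε d i * zeroBlockDiag ε d' ((blockPerm ε Φ g).symm i) := by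
  by_cases h : t i = 0
  · rw [blockPerm_symm_apply_of_eq_zero ε Φ g h, zeroBlockDiag_coe_symm]
    simp [zeroBlockDiag, h]
  · have h' := mt (blockPerm_symm_apply_eq_zero_iff ε Φ g).mp h
    simp [zeroBlockDiag, h, h']

end BlockPerm

section Monomial
variable {A : Type} {n : ℕ}

theorem wreath_mul_left [Group A] (x y : Wreath A n) (i : Fin n) :
    (x * y).left i = x.left i * y.left (x.right.symm i) := rfl

variable [CommGroup A] {M : Type*} [Zero M] {t : Fin n → M} [DecidablePred fun i => t i = 0]
  {u₀ s : ℕ} {u : Fin s → ℕ}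
  (ε : {i // t i = 0} ≃ Fin u₀) (Φ : {i // t i ≠ 0} ≃ (j : Fin s) × Fin (u j))

noncomputable def blockEmbedding (w : Fin n → A) :
    Wreath A u₀ × ((j : Fin s) → Equiv.Perm (Fin (u j))) →* Wreath A n :=
  MonoidHom.mk' (fun g => ⟨zeroBlockDiag ε g.1.left *
      permCoboundary w (blockPerm ε Φ (g.1.right, g.2)), blockPerm ε Φ (g.1.right, g.2)⟩)
    fun g g' => by
      have hσ : blockPerm ε Φ ((g * g').1.right, (g * g').2) = _ :=
        map_mul (blockPerm ε Φ) (g.1.right, g.2) (g'.1.right, g'.2)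
      have hd : (g * g').1.left = fun k => g.1.left k * g'.1.left (g.1.right.symm k) := rfl
      refine SemidirectProduct.ext (funext fun i => ?_) hσ
      simp only [wreath_mul_left, Pi.mul_apply]
      rw [hd, zeroBlockDiag_mul_comp_symm ε Φ _ _ (g.1.right, g.2), hσ, permCoboundary_mul,
        mul_mul_mul_comm]

theorem blockEmbedding_left (w : Fin n → A) (g) :
    (blockEmbedding ε Φ w g).left =
      zeroBlockDiag ε g.1.left * permCoboundary w (blockPerm ε Φ (g.1.right, g.2)) := rfl

theorem blockEmbedding_right (w : Fin n → A) (g) :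
    (blockEmbedding ε Φ w g).right = blockPerm ε Φ (g.1.right, g.2) := rfl

theorem blockEmbedding_injective (w : Fin n → A) : Function.Injective (blockEmbedding ε Φ w) := by
  intro g g' h
  have hσ : (g.1.right, g.2) = (g'.1.right, g'.2) := by
    apply blockPerm_injective ε Φ
    rw [← blockEmbedding_right ε Φ w, h, blockEmbedding_right]
  have hl := congrArg SemidirectProduct.left h
  rw [blockEmbedding_left, blockEmbedding_left, hσ] at hl
  have hd : g.1.left = g'.1.left := funext fun k => by
    simpa only [zeroBlockDiag_coe_symm] using congr_fun (mul_right_cancel hl) (ε.symm k)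
  obtain ⟨hρ, hπ⟩ := Prod.mk.inj hσ
  exact Prod.ext (SemidirectProduct.ext hd hρ) hπ

end Monomial

section Reflections
variable {ℓ} {n : ℕ}

theorem linAct_apply (x : Wreath ℤ_[ℓ]ˣ n) (v : Fin n → ℤ_[ℓ]) (i : Fin n) :
    linAct ℓ n x v i = x.left i * v (x.right.symm i) := rfl

theorem linAct_inl_apply (d : Fin n → ℤ_[ℓ]ˣ) (v : Fin n → ℤ_[ℓ]) (i : Fin n) :
    linAct ℓ n (SemidirectProduct.inl d) v i = d i * v i := rfl

theorem isWreathReflection_of_ker_eq {x : Wreath ℤ_[ℓ]ˣ n} (hx : x ≠ 1)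
    {f : (Fin n → ℤ_[ℓ]) →ₗ[ℤ_[ℓ]] ℤ_[ℓ]} {v : Fin n → ℤ_[ℓ]} (hv : f v = 1)
    (hker : LinearMap.ker (linAct ℓ n x - LinearMap.id) = LinearMap.ker f) :
    IsWreathReflection ℓ n x := by
  refine ⟨hx, ?_⟩
  rw [hker, finrank_ker_add_one_of_surjective (fun c => ⟨c • v, by simp [hv]⟩), Fintype.card_fin]

noncomputable def diagReflection (a : Fin n) (ζ : ℤ_[ℓ]ˣ) : Wreath ℤ_[ℓ]ˣ n :=
  SemidirectProduct.inl (Pi.mulSingle a ζ)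

noncomputable def swapReflection (a b : Fin n) (ζ : ℤ_[ℓ]ˣ) : Wreath ℤ_[ℓ]ˣ n :=
  ⟨Pi.mulSingle a ζ * Pi.mulSingle b ζ⁻¹, Equiv.swap a b⟩

theorem isWreathReflection_diagReflection (a : Fin n) {ζ : ℤ_[ℓ]ˣ} (hζ : ζ ≠ 1) :
    IsWreathReflection ℓ n (diagReflection a ζ) := by
  refine isWreathReflection_of_ker_eq (f := LinearMap.proj a) (v := Pi.single a 1) ?_ (by simp) ?_
  · intro h
    simpa [diagReflection, hζ] using congr_fun (congrArg SemidirectProduct.left h) a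
  have hζ' : (ζ : ℤ_[ℓ]) - 1 ≠ 0 := sub_ne_zero.mpr (by simpa [Units.val_eq_one] using hζ)
  ext v
  simp only [LinearMap.mem_ker, LinearMap.sub_apply, LinearMap.id_apply, sub_eq_zero, funext_iff,
    diagReflection, linAct_inl_apply, LinearMap.proj_apply]
  refine ⟨fun h => ?_, fun h i => ?_⟩
  · have ha : ((ζ : ℤ_[ℓ]) - 1) * v a = 0 := by simpa [sub_mul, sub_eq_zero] using h a
    exact (mul_eq_zero.mp ha).resolve_left hζ'
  · rcases eq_or_ne i a with rfl | hi
    · simp [h]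
    · simp [Pi.mulSingle_eq_of_ne hi]

theorem isWreathReflection_swapReflection {a b : Fin n} (hab : a ≠ b) (ζ : ℤ_[ℓ]ˣ) :
    IsWreathReflection ℓ n (swapReflection a b ζ) := by
  refine isWreathReflection_of_ker_eq (f := LinearMap.proj a - (ζ : ℤ_[ℓ]) • LinearMap.proj b)
    (v := Pi.single a 1) ?_ (by simp [Pi.single_eq_of_ne' hab]) ?_
  · intro h
    have hσ := Equiv.congr_fun (congrArg SemidirectProduct.right h) a
    simp only [swapReflection, SemidirectProduct.one_right, Equiv.swap_apply_left] at hσ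
    exact hab hσ.symm
  ext v
  simp only [LinearMap.mem_ker, LinearMap.sub_apply, LinearMap.id_apply, sub_eq_zero, funext_iff,
    linAct_apply, LinearMap.proj_apply, LinearMap.smul_apply, smul_eq_mul, swapReflection,
    Equiv.symm_swap]
  refine ⟨fun h => ?_, fun h i => ?_⟩
  · simpa [Pi.mulSingle_eq_of_ne' hab, Pi.mulSingle_eq_of_ne hab] using (h a).symm
  rcases eq_or_ne i a with rfl | hia
  · simp [Pi.mulSingle_eq_of_ne hab, h]
  rcases eq_or_ne i b with rfl | hib
  · simp [Pi.mulSingle_eq_of_ne' hab, h]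
  · simp [Pi.mulSingle_eq_of_ne hia, Pi.mulSingle_eq_of_ne hib,
      Equiv.swap_apply_of_ne_of_ne hia hib]

end Reflections

section Centralizer
variable {ℓ} {e r n u₀ s : ℕ} {u : Fin s → ℕ} {t : Fin n → QmodZ ℓ}

theorem blockLabel_symm_apply_of_mem {Φ : {i // t i ≠ 0} ≃ (j : Fin s) × Fin (u j)}
    (hΦ : ∀ i i' : {i : Fin n // t i ≠ 0}, (Φ i).1 = (Φ i').1 ↔
      ∃ ζ : ℤ_[ℓ]ˣ, ζ ^ e = 1 ∧ t i.1 = (ζ : ℤ_[ℓ]) • t i'.1)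
    {x : Wreath ℤ_[ℓ]ˣ n} (hx : x ∈ torusCentralizer ℓ e r n t) (i : Fin n) :
    blockLabel t (fun m => (Φ m).1) (x.right.symm i) = blockLabel t (fun m => (Φ m).1) i :=
  ((blockLabel_eq_iff hΦ).mpr ⟨x.left i, hx.1.1 i, (hx.2 i).symm⟩).symm

variable [DecidablePred fun i => t i = 0] (ε : {i // t i = 0} ≃ Fin u₀)
  (Φ : {i // t i ≠ 0} ≃ (j : Fin s) × Fin (u j))

variable (e r) in
noncomputable def centralizerEmbedding :
    Gerr ℤ_[ℓ]ˣ e r u₀ × ((j : Fin s) → Equiv.Perm (Fin (u j))) →* Wreath ℤ_[ℓ]ˣ n :=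
  (blockEmbedding ε Φ (blockRoot ℤ_[ℓ] e t fun m => (Φ m).1)).comp
    ((Gerr ℤ_[ℓ]ˣ e r u₀).subtype.prodMap (MonoidHom.id _))

theorem centralizerEmbedding_injective : Function.Injective (centralizerEmbedding e r ε Φ) :=
  (blockEmbedding_injective ε Φ _).comp (Subtype.val_injective.prodMap Function.injective_id)

variable {ε Φ}

theorem blockEmbedding_mem
    (hΦ : ∀ i i' : {i : Fin n // t i ≠ 0}, (Φ i).1 = (Φ i').1 ↔
      ∃ ζ : ℤ_[ℓ]ˣ, ζ ^ e = 1 ∧ t i.1 = (ζ : ℤ_[ℓ]) • t i'.1)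
    {g : Wreath ℤ_[ℓ]ˣ u₀ × ((j : Fin s) → Equiv.Perm (Fin (u j)))}
    (hg : g.1 ∈ Gerr ℤ_[ℓ]ˣ e r u₀) :
    blockEmbedding ε Φ (blockRoot ℤ_[ℓ] e t fun m => (Φ m).1) g ∈ torusCentralizer ℓ e r n t := by
  obtain ⟨hpow, hprod⟩ := hg
  refine ⟨⟨fun i => ?_, ?_⟩, fun i => ?_⟩ <;>
    simp only [blockEmbedding_left, blockEmbedding_right]
  · rw [Pi.mul_apply, mul_pow, permCoboundary_blockRoot_pow hΦ, mul_one, zeroBlockDiag]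
    split_ifs
    · exact hpow _
    · exact one_pow e
  · rw [Finset.prod_congr rfl fun i _ => Pi.mul_apply _ _ i, Finset.prod_mul_distrib,
      prod_zeroBlockDiag, prod_permCoboundary, mul_one]
    exact hprod
  · rw [Pi.mul_apply, Units.val_mul, mul_smul,
      permCoboundary_blockRoot_smul hΦ (blockLabel_blockPerm_symm_apply ε Φ _)]
    by_cases h : t i = 0
    · simp [h]
    · simp [zeroBlockDiag, h]

variable (ε) in
theorem left_eq_of_mem_torusCentralizer (he : IsUnit (e : ℤ_[ℓ]))
    (hΦ : ∀ i i' : {i : Fin n // t i ≠ 0}, (Φ i).1 = (Φ i').1 ↔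
      ∃ ζ : ℤ_[ℓ]ˣ, ζ ^ e = 1 ∧ t i.1 = (ζ : ℤ_[ℓ]) • t i'.1)
    {x : Wreath ℤ_[ℓ]ˣ n} (hx : x ∈ torusCentralizer ℓ e r n t) :
    x.left = zeroBlockDiag ε (fun k => x.left (ε.symm k)) *
      permCoboundary (blockRoot ℤ_[ℓ] e t fun m => (Φ m).1) x.right := by
  have hlabel := blockLabel_symm_apply_of_mem hΦ hx
  funext i
  by_cases h : t i = 0
  · have h' : t (x.right.symm i) = 0 := by
      rw [← blockLabel_eq_none_iff (cls := fun m => (Φ m).1), hlabel, blockLabel_eq_none_iff.mpr h]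
    simp [zeroBlockDiag, h, permCoboundary, blockRoot_of_eq_zero h, blockRoot_of_eq_zero h']
  · have h' : t (x.right.symm i) ≠ 0 := fun h' => h (by rw [← hx.2 i, h', smul_zero])
    rw [Pi.mul_apply, zeroBlockDiag, dif_neg h, one_mul]
    exact eq_of_pow_eq_one_of_smul_eq_smul he (hx.1.1 i) (permCoboundary_blockRoot_pow hΦ _ i) h'
      ((hx.2 i).trans (permCoboundary_blockRoot_smul hΦ hlabel i).symm)

theorem range_centralizerEmbedding (he : IsUnit (e : ℤ_[ℓ]))
    (hΦ : ∀ i i' : {i : Fin n // t i ≠ 0}, (Φ i).1 = (Φ i').1 ↔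
      ∃ ζ : ℤ_[ℓ]ˣ, ζ ^ e = 1 ∧ t i.1 = (ζ : ℤ_[ℓ]) • t i'.1) :
    (centralizerEmbedding e r ε Φ).range = torusCentralizer ℓ e r n t := by
  refine le_antisymm ?_ fun x hx => ?_
  · rintro _ ⟨g, rfl⟩
    exact blockEmbedding_mem hΦ g.1.2
  obtain ⟨g, hg⟩ := (mem_range_blockPerm_iff ε Φ).mpr fun i => by
    simpa using (blockLabel_symm_apply_of_mem hΦ hx (x.right i)).symm
  have hleft := left_eq_of_mem_torusCentralizer ε he hΦ hx
  have hd : (⟨fun k => x.left (ε.symm k), g.1⟩ : Wreath ℤ_[ℓ]ˣ u₀) ∈ Gerr ℤ_[ℓ]ˣ e r u₀ := by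
    refine ⟨fun k => hx.1.1 _, ?_⟩
    have hprod := hx.1.2
    rw [hleft, Finset.prod_congr rfl fun i _ => Pi.mul_apply _ _ i, Finset.prod_mul_distrib,
      prod_zeroBlockDiag, prod_permCoboundary, mul_one] at hprod
    exact hprod
  refine ⟨(⟨_, hd⟩, g.2), SemidirectProduct.ext ?_ hg⟩
  show _ * permCoboundary _ (blockPerm ε Φ g) = x.left
  rw [hg]
  exact hleft.symm

end Centralizer

section Generation
variable {ℓ} {e r n : ℕ} {t : Fin n → QmodZ ℓ}

theorem diagReflection_mem {a : Fin n} (ha : t a = 0) {ζ : ℤ_[ℓ]ˣ} (hζe : ζ ^ e = 1)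
    (hζr : ζ ^ (e / r) = 1) : diagReflection a ζ ∈ torusCentralizer ℓ e r n t := by
  refine ⟨⟨fun i => ?_, ?_⟩, fun i => ?_⟩
  · rcases eq_or_ne i a with rfl | hi
    · simpa [diagReflection] using hζe
    · simp [diagReflection, Pi.mulSingle_eq_of_ne hi]
  · simpa [diagReflection] using hζr
  · show ((Pi.mulSingle a ζ : Fin n → ℤ_[ℓ]ˣ) i : ℤ_[ℓ]) • t i = t i
    rcases eq_or_ne i a with rfl | hi
    · simp [ha]
    · simp [Pi.mulSingle_eq_of_ne hi]

theorem swapReflection_mem {a b : Fin n} (hab : a ≠ b) {ζ : ℤ_[ℓ]ˣ} (hζ : ζ ^ e = 1)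
    (h : t a = (ζ : ℤ_[ℓ]) • t b) : swapReflection a b ζ ∈ torusCentralizer ℓ e r n t := by
  refine ⟨⟨fun i => ?_, ?_⟩, fun i => ?_⟩
  · rcases eq_or_ne i a with rfl | hia
    · simpa [swapReflection, Pi.mulSingle_eq_of_ne hab] using hζ
    rcases eq_or_ne i b with rfl | hib
    · simpa [swapReflection, Pi.mulSingle_eq_of_ne' hab] using hζ
    · simp [swapReflection, Pi.mulSingle_eq_of_ne hia, Pi.mulSingle_eq_of_ne hib]
  · simp [swapReflection, Finset.prod_mul_distrib]
  simp only [swapReflection, Equiv.symm_swap, Pi.mul_apply]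
  rcases eq_or_ne i a with rfl | hia
  · simp [Pi.mulSingle_eq_of_ne hab, h]
  rcases eq_or_ne i b with rfl | hib
  · simp [Pi.mulSingle_eq_of_ne' hab, h, smul_smul]
  · simp [Pi.mulSingle_eq_of_ne hia, Pi.mulSingle_eq_of_ne hib,
      Equiv.swap_apply_of_ne_of_ne hia hib]

theorem swapReflection_mul_swapReflection_one (a b : Fin n) (ζ : ℤ_[ℓ]ˣ) :
    swapReflection a b ζ * swapReflection a b 1 =
      SemidirectProduct.inl (Pi.mulSingle a ζ * Pi.mulSingle b ζ⁻¹) := by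
  ext i
  · simp [swapReflection, wreath_mul_left]
  · simp [swapReflection]

theorem inl_mem_closure_reflections (he : IsUnit (e : ℤ_[ℓ])) {d : Fin n → ℤ_[ℓ]ˣ}
    (hd : SemidirectProduct.inl d ∈ torusCentralizer ℓ e r n t) :
    SemidirectProduct.inl d ∈
      Subgroup.closure {x | x ∈ torusCentralizer ℓ e r n t ∧ IsWreathReflection ℓ n x} := by
  set K := Subgroup.closure {x | x ∈ torusCentralizer ℓ e r n t ∧ IsWreathReflection ℓ n x}
  have hK {x} (hx : x ∈ torusCentralizer ℓ e r n t) (hr : IsWreathReflection ℓ n x) : x ∈ K :=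
    Subgroup.subset_closure ⟨hx, hr⟩
  refine Pi.mem_subgroup_of_mulSingle_mem (H := K.comap SemidirectProduct.inl)
    (p := fun i => t i = 0) ?_ ?_ (fun i hi => ?_) hd.1.1 hd.1.2
  · intro a b ha hb z hz
    rw [Subgroup.mem_comap]
    rcases eq_or_ne a b with rfl | hab
    · rw [← Pi.mulSingle_mul, mul_inv_cancel, Pi.mulSingle_one, map_one]
      exact K.one_mem
    have hzero (ζ : ℤ_[ℓ]ˣ) : t a = (ζ : ℤ_[ℓ]) • t b := by rw [ha, hb, smul_zero]
    rw [← swapReflection_mul_swapReflection_one a b]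
    exact K.mul_mem
      (hK (swapReflection_mem hab hz (hzero z)) (isWreathReflection_swapReflection hab z))
      (hK (swapReflection_mem hab (one_pow e) (hzero 1)) (isWreathReflection_swapReflection hab 1))
  · intro a ha z hze hzr
    rw [Subgroup.mem_comap]
    rcases eq_or_ne z 1 with rfl | hz1
    · rw [Pi.mulSingle_one, map_one]
      exact K.one_mem
    · exact hK (diagReflection_mem ha hze hzr) (isWreathReflection_diagReflection a hz1)
  · exact eq_of_pow_eq_one_of_smul_eq_smul he (hd.1.1 i) (one_pow e) hi
      (by rw [Units.val_one, one_smul]; exact hd.2 i)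

theorem torusCentralizer_le_closure_reflections (he : IsUnit (e : ℤ_[ℓ])) :
    torusCentralizer ℓ e r n t ≤
      Subgroup.closure {x | x ∈ torusCentralizer ℓ e r n t ∧ IsWreathReflection ℓ n x} := by
  suffices h : ∀ m, ∀ x ∈ torusCentralizer ℓ e r n t, x.right.support.card = m →
      x ∈ Subgroup.closure {x | x ∈ torusCentralizer ℓ e r n t ∧ IsWreathReflection ℓ n x} from
    fun x hx => h _ x hx rfl
  intro m
  induction m using Nat.strong_induction_on with
  | _ m ih =>
  intro x hx hm
  by_cases hσ : x.right = 1
  · rw [← SemidirectProduct.inl_left_mul_inr_right x, hσ, map_one, mul_one] at hx ⊢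
    exact inl_mem_closure_reflections he hx
  obtain ⟨a, ha⟩ : ∃ a, x.right a ≠ a := by simpa [Equiv.Perm.ext_iff] using hσ
  have hab : a ≠ x.right a := ha.symm
  have hrel : t a = (((x.left (x.right a))⁻¹ : ℤ_[ℓ]ˣ) : ℤ_[ℓ]) • t (x.right a) := by
    have hfix := hx.2 (x.right a)
    rw [Equiv.symm_apply_apply] at hfix
    rw [← hfix, smul_smul, ← Units.val_mul, inv_mul_cancel, Units.val_one, one_smul]
  have hτ := swapReflection_mem (r := r) hab (by rw [inv_pow, hx.1.1, inv_one]) hrel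
  have hτx := ih _ (hm ▸ Equiv.Perm.card_support_swap_mul ha) _
    ((torusCentralizer ℓ e r n t).mul_mem hτ hx) rfl
  rw [← inv_mul_cancel_left (swapReflection a (x.right a) _) x]
  exact Subgroup.mul_mem _
    (Subgroup.inv_mem _ (Subgroup.subset_closure ⟨hτ, isWreathReflection_swapReflection hab _⟩))
    hτx

end Generation

theorem torusCentralizer_iso (e r n : ℕ) (heℓ : e ∣ ℓ - 1)
    (t : Fin n → QmodZ ℓ)
    (u₀ : ℕ) (hu₀ : Nat.card {i : Fin n // t i = 0} = u₀)
    (s : ℕ) (u : Fin s → ℕ)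
    (Φ : {i : Fin n // t i ≠ 0} ≃ ((j : Fin s) × Fin (u j)))
    (hΦ : ∀ i i' : {i : Fin n // t i ≠ 0}, (Φ i).1 = (Φ i').1 ↔
      ∃ ζ : ℤ_[ℓ]ˣ, ζ ^ e = 1 ∧ t i.1 = (ζ : ℤ_[ℓ]) • t i'.1) :
    Nonempty ((torusCentralizer ℓ e r n t) ≃*
        (Gerr ℤ_[ℓ]ˣ e r u₀ × ((j : Fin s) → Equiv.Perm (Fin (u j))))) ∧
      Subgroup.closure
        {c : torusCentralizer ℓ e r n t |
          IsWreathReflection ℓ n (c : Wreath ℤ_[ℓ]ˣ n)} = ⊤ := by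
  classical
  have he := PadicInt.isUnit_natCast_of_dvd_sub_one heℓ
  let ε : {i // t i = 0} ≃ Fin u₀ :=
    Fintype.equivFinOfCardEq (Nat.card_eq_fintype_card.symm.trans hu₀)
  have hrange := range_centralizerEmbedding (r := r) (ε := ε) he hΦ
  have hinj := centralizerEmbedding_injective (e := e) (r := r) ε Φ
  refine ⟨⟨?_⟩, ?_⟩
  · exact (MulEquiv.subgroupCongr hrange.symm).trans (MonoidHom.ofInjective hinj).symm
  · exact Subgroup.closure_preimage_subtype_eq_top (s := {x | IsWreathReflection ℓ n x})
      (torusCentralizer_le_closure_reflections he)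
end

section
/- Let F be a saturated fusion system on a finite p-group S and suppose T ≤ S is an abelian subgroup that is weakly F-closed. Then for any subgroups P, Q ≤ T and any morphism φ ∈ Hom_F(P,Q), there exists φ̄ ∈ Aut_F(T) with φ̄|_P = φ. -/
/-- A fusion system on a `p`-group `S`: for each subgroup `P ≤ S` a collection of
injective homomorphisms `↥P →* S` (the morphisms of the fusion category, with target
the image subgroup), containing all conjugation maps and closed under restriction,
composition, and inverses of isomorphisms. -/
structure FusionSystem (S : Type) [Group S] where
  /-- `φ` is a morphism of the fusion system with source `P`. -/
  IsMor : ∀ (P : Subgroup S), (↥P →* S) → Prop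
  inj_of : ∀ {P : Subgroup S} {φ : ↥P →* S}, IsMor P φ → Function.Injective φ
  conj_mem : ∀ (P : Subgroup S) (g : S),
    IsMor P ((MulAut.conj g).toMonoidHom.comp P.subtype)
  restrict_mem : ∀ {P : Subgroup S} {φ : ↥P →* S} (P' : Subgroup S) (h : P' ≤ P),
    IsMor P φ → IsMor P' (φ.comp (Subgroup.inclusion h))
  comp_mem : ∀ {P Q : Subgroup S} {φ : ↥P →* S} {ψ : ↥Q →* S}
    (h : ∀ x, φ x ∈ Q), IsMor P φ → IsMor Q ψ →
    IsMor P (ψ.comp (φ.codRestrict Q h))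
  inv_mem : ∀ {P : Subgroup S} {φ : ↥P →* S} (hφ : IsMor P φ),
    IsMor φ.range
      (P.subtype.comp (MonoidHom.ofInjective (inj_of hφ)).symm.toMonoidHom)

/-- For an injective homomorphism `φ` defined on `Q` with image `P`, the subgroup
`N_φ = {g ∈ N_S(Q) | φ ∘ c_g ∘ φ⁻¹ ∈ Aut_S(P)}`. -/
def Nphi {S : Type} [Group S] (Q P : Subgroup S) (φ : ↥Q →* S) : Subgroup S where
  carrier := {g | g ∈ Subgroup.normalizer (Q : Set S) ∧ ∃ h ∈ Subgroup.normalizer (P : Set S),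
    ∀ x y : ↥Q, (y : S) = g * x * g⁻¹ → φ y = h * φ x * h⁻¹}
  one_mem' := by
    refine ⟨(Subgroup.normalizer (Q : Set S)).one_mem, 1, (Subgroup.normalizer (P : Set S)).one_mem, ?_⟩
    intro x y hxy
    have h1 : (y : S) = (x : S) := by simpa using hxy
    have h2 : y = x := Subtype.ext h1
    simp [h2]
  mul_mem' := by
    rintro g g' ⟨hg, h, hh, hcomm⟩ ⟨hg', h', hh', hcomm'⟩
    refine ⟨mul_mem hg hg', h * h', mul_mem hh hh', ?_⟩
    intro x y hxy
    have hz : g' * (x : S) * g'⁻¹ ∈ Q := (Subgroup.mem_normalizer_iff.mp hg' x).mp x.2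
    have h1 : φ ⟨g' * (x : S) * g'⁻¹, hz⟩ = h' * φ x * h'⁻¹ :=
      hcomm' x ⟨g' * (x : S) * g'⁻¹, hz⟩ rfl
    have h2 : φ y = h * φ ⟨g' * (x : S) * g'⁻¹, hz⟩ * h⁻¹ := by
      apply hcomm ⟨g' * (x : S) * g'⁻¹, hz⟩ y
      rw [hxy]
      group
    rw [h2, h1]
    group
  inv_mem' := by
    rintro g ⟨hg, h, hh, hcomm⟩
    refine ⟨inv_mem hg, h⁻¹, inv_mem hh, ?_⟩
    intro x y hxy
    have hx : (x : S) = g * (y : S) * g⁻¹ := by rw [hxy]; group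
    have := hcomm y x hx
    rw [this]
    group

namespace FusionSystem

variable {S : Type} [Group S] (F : FusionSystem S)

/-- `P` is fully automized: `Aut_S(P)` is a Sylow `p`-subgroup of `Aut_F(P)`, i.e.
its index in `Aut_F(P)` is prime to `p`. -/
def FullyAutomized (p : ℕ) (P : Subgroup S) : Prop :=
  ¬ p ∣ (Nat.card {φ : ↥P →* S // F.IsMor P φ ∧ φ.range = P} /
    Nat.card {φ : ↥P →* S //
      ∃ g ∈ Subgroup.normalizer (P : Set S), φ = (MulAut.conj g).toMonoidHom.comp P.subtype})

/-- `P` is receptive: every `F`-isomorphism onto `P` extends to `N_φ`. -/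
def Receptive (P : Subgroup S) : Prop :=
  ∀ (Q : Subgroup S) (φ : ↥Q →* S), F.IsMor Q φ → φ.range = P →
    ∃ (hQN : Q ≤ Nphi Q P φ) (ψ : ↥(Nphi Q P φ) →* S),
      F.IsMor (Nphi Q P φ) ψ ∧ ∀ x : ↥Q, ψ (Subgroup.inclusion hQN x) = φ x

/-- `F` is saturated: every subgroup is `F`-isomorphic to one which is fully
automized and receptive. -/
def Saturated (p : ℕ) : Prop :=
  ∀ P : Subgroup S, ∃ (Q : Subgroup S) (φ : ↥P →* S),
    F.IsMor P φ ∧ φ.range = Q ∧ F.FullyAutomized p Q ∧ F.Receptive Q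

/-- `T` is weakly `F`-closed: every `F`-conjugate of `T` equals `T`. -/
def WeaklyClosed (T : Subgroup S) : Prop :=
  ∀ φ : ↥T →* S, F.IsMor T φ → φ.range = T

end FusionSystem

/-!
Pick, by saturation, an `F`-isomorphism `χ : P → R` onto a receptive subgroup `R`, and let
`μ = χ ∘ φ⁻¹ : φ(P) → R`. Since `T` is abelian, it centralizes `P` and `φ(P)`, so it lies in both
`N_χ` and `N_μ`; receptivity extends `χ` and `μ` to `F`-morphisms `ψ₂, ψ₁` on `T`, which map `T`
onto `T` because `T` is weakly closed. Then `ψ₁⁻¹ ∘ ψ₂` is an `F`-automorphism of `T`, and on `P`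
it equals `μ⁻¹ ∘ χ = φ`.
-/

theorem centralizer_le_Nphi {S : Type} [Group S] (Q P : Subgroup S) (φ : ↥Q →* S) :
    Subgroup.centralizer (Q : Set S) ≤ Nphi Q P φ := by
  intro g hg
  refine ⟨Subgroup.centralizer_le_normalizer _ hg, 1, Subgroup.one_mem _, fun x y hxy => ?_⟩
  have hyx : y = x := Subtype.ext <| by
    rw [hxy, ← Subgroup.mem_centralizer_iff.mp hg x x.2, mul_inv_cancel_right]
  rw [hyx, one_mul, inv_one, mul_one]

namespace FusionSystem

variable {S : Type} [Group S] {F : FusionSystem S}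

theorem IsMor.exists_inv {P Q : Subgroup S} {φ : ↥P →* S} (hφ : F.IsMor P φ)
    (hQ : φ.range = Q) :
    ∃ ι : ↥Q →* S, F.IsMor Q ι ∧ ι.range = P ∧ ∀ (x : ↥P) (hx : φ x ∈ Q), ι ⟨φ x, hx⟩ = x := by
  subst hQ
  refine ⟨_, F.inv_mem hφ, ?_, fun x hx => ?_⟩
  · ext y
    refine ⟨?_, fun hy => ⟨MonoidHom.ofInjective (F.inj_of hφ) ⟨y, hy⟩, ?_⟩⟩
    · rintro ⟨z, rfl⟩
      exact Subtype.prop _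
    · simp
  · have : (⟨φ x, hx⟩ : ↥φ.range) = MonoidHom.ofInjective (F.inj_of hφ) x :=
      Subtype.ext (MonoidHom.ofInjective_apply _).symm
    simp [this]

theorem exists_isMor_comp_inv {P : Subgroup S} {φ χ : ↥P →* S} (hφ : F.IsMor P φ)
    (hχ : F.IsMor P χ) :
    ∃ μ : ↥φ.range →* S, F.IsMor φ.range μ ∧ μ.range = χ.range ∧
      ∀ x : ↥P, μ ⟨φ x, x, rfl⟩ = χ x := by
  obtain ⟨ι, hι, hιP, hιφ⟩ := hφ.exists_inv rfl
  have hιmem : ∀ y, ι y ∈ P := fun y => hιP.le ⟨y, rfl⟩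
  have hιφ' : ∀ x : ↥P, ι.codRestrict P hιmem ⟨φ x, x, rfl⟩ = x :=
    fun x => Subtype.ext (hιφ x _)
  refine ⟨χ.comp (ι.codRestrict P hιmem), F.comp_mem hιmem hι hχ, ?_, fun x => ?_⟩
  · ext y
    refine ⟨fun ⟨z, hz⟩ => ⟨_, hz⟩, ?_⟩
    rintro ⟨x, rfl⟩
    exact ⟨⟨φ x, x, rfl⟩, by simp [hιφ']⟩
  · simp [hιφ']

theorem Receptive.exists_extension {R U T : Subgroup S} (hR : F.Receptive R) {ν : ↥U →* S}
    (hν : F.IsMor U ν) (hνR : ν.range = R) (hUT : U ≤ T)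
    (hT : T ≤ Subgroup.centralizer (U : Set S)) :
    ∃ ψ : ↥T →* S, F.IsMor T ψ ∧ ∀ x : ↥U, ψ (Subgroup.inclusion hUT x) = ν x := by
  obtain ⟨_, ψ, hψ, hψν⟩ := hR U ν hν hνR
  have hTN : T ≤ Nphi U R ν := hT.trans (centralizer_le_Nphi U R ν)
  exact ⟨ψ.comp (Subgroup.inclusion hTN), F.restrict_mem T hTN hψ, hψν⟩

end FusionSystem

theorem fusion_extend_to_weakly_closed_general (p : ℕ)
    (S : Type) [Group S]
    (F : FusionSystem S) (hsat : F.Saturated p)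
    (T : Subgroup S) (hab : ∀ x y : ↥T, x * y = y * x) (hwc : F.WeaklyClosed T)
    (P Q : Subgroup S) (hP : P ≤ T) (hQ : Q ≤ T)
    (φ : ↥P →* S) (hφ : F.IsMor P φ) (hφQ : φ.range ≤ Q) :
    ∃ ψ : ↥T →* S, F.IsMor T ψ ∧ ψ.range = T ∧
      ∀ x : ↥P, ψ (Subgroup.inclusion hP x) = φ x := by
  obtain ⟨R, χ, hχ, rfl, -, hR⟩ := hsat P
  have hφT : φ.range ≤ T := hφQ.trans hQ
  have hcent : ∀ U ≤ T, T ≤ Subgroup.centralizer (U : Set S) := fun U hU =>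
    (Subgroup.le_centralizer_iff_isMulCommutative.mpr ⟨⟨hab⟩⟩).trans (Subgroup.centralizer_le hU)
  obtain ⟨μ, hμ, hμR, hμφ⟩ := F.exists_isMor_comp_inv hφ hχ
  obtain ⟨ψ₁, hψ₁, hψ₁μ⟩ := hR.exists_extension hμ hμR hφT (hcent _ hφT)
  obtain ⟨ψ₂, hψ₂, hψ₂χ⟩ := hR.exists_extension hχ rfl hP (hcent _ hP)
  obtain ⟨ι, hι, -, hιψ₁⟩ := hψ₁.exists_inv (hwc ψ₁ hψ₁)
  have hψ₂T : ∀ t, ψ₂ t ∈ T := fun t => (hwc ψ₂ hψ₂).le ⟨t, rfl⟩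
  have hψ := F.comp_mem hψ₂T hψ₂ hι
  refine ⟨_, hψ, hwc _ hψ, fun x => ?_⟩
  have hψ₂x : ψ₂ (Subgroup.inclusion hP x) = ψ₁ ⟨φ x, hφT ⟨x, rfl⟩⟩ := by
    rw [hψ₂χ, ← hμφ, ← hψ₁μ]
    rfl
  simp only [MonoidHom.comp_apply, MonoidHom.codRestrict_apply, hψ₂x, hιψ₁]

/-- Let `F` be a saturated fusion system on a finite `p`-group `S` and let `T ≤ S`
be abelian and weakly `F`-closed.  Then every `F`-morphism `φ : P → Q` between
subgroups `P, Q ≤ T` extends to an `F`-automorphism of `T`. -/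
theorem fusion_extend_to_weakly_closed (p : ℕ) (hp : p.Prime)
    (S : Type) [Group S] [Finite S] (hS : IsPGroup p S)
    (F : FusionSystem S) (hsat : F.Saturated p)
    (T : Subgroup S) (hab : ∀ x y : ↥T, x * y = y * x) (hwc : F.WeaklyClosed T)
    (P Q : Subgroup S) (hP : P ≤ T) (hQ : Q ≤ T)
    (φ : ↥P →* S) (hφ : F.IsMor P φ) (hφQ : φ.range ≤ Q) :
    ∃ ψ : ↥T →* S, F.IsMor T ψ ∧ ψ.range = T ∧
      ∀ x : ↥P, ψ (Subgroup.inclusion hP x) = φ x :=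
  fusion_extend_to_weakly_closed_general p S F hsat T hab hwc P Q hP hQ φ hφ hφQ
end
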